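/- Let d ≥ 1, let Σ be a d × d real positive-definite symmetric matrix, and let x, y ∈ ℝ^d. Let w be a random vector with the multivariate Gaussian distribution N(0, Σ⁻¹) on ℝ^d and let b be uniformly distributed on [0, 2π], with w and b independent. Then E[ 2·sin(⟨w, x⟩ + b)·sin(⟨w, y⟩ + b) ] = exp( −(1/2)·⟨x − y, Σ⁻¹(x − y)⟩ ); that is, the expected product of random Fourier features equals the RBF kernel with covariance Σ. -/

import Mathlib

open MeasureTheory Matrix

/-- The centered multivariate Gaussian measure `N(0, S⁻¹)` on `ℝ^d`, for a
positive-definite precision matrix `Σ`, given by its Lebesgue density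
`w ↦ sqrt(det Σ)/sqrt((2π)^d) · exp(−½ wᵀ Σ w)`. -/
noncomputable def gaussianOfPrecision {d : ℕ} (S : Matrix (Fin d) (Fin d) ℝ) :
    Measure (Fin d → ℝ) :=
  volume.withDensity fun w =>
    ENNReal.ofReal
      (Real.sqrt S.det / Real.sqrt ((2 * Real.pi) ^ d) *
        Real.exp (-(1 / 2) * (w ⬝ᵥ S.mulVec w)))

/-- The uniform probability measure on the interval `[0, 2π]`. -/
noncomputable def uniformPhase : Measure ℝ :=
  (ENNReal.ofReal (2 * Real.pi))⁻¹ • volume.restrict (Set.Icc 0 (2 * Real.pi))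

open Complex NNReal ENNReal


lemma sqrt_pow' (x : ℝ) (hx : 0 ≤ x) (d : ℕ) : Real.sqrt (x ^ d) = Real.sqrt x ^ d := by
  rw [Real.sqrt_eq_rpow, Real.sqrt_eq_rpow, ← Real.rpow_natCast x d, ← Real.rpow_mul hx,
    ← Real.rpow_natCast (x ^ (1/2 : ℝ)) d, ← Real.rpow_mul hx, mul_comm]

lemma gauss_cos_integral (d : ℕ) (t : Fin d → ℝ) :
    ∫ v : Fin d → ℝ, Real.exp (-(1 / 2) * (v ⬝ᵥ v)) * Real.cos (v ⬝ᵥ t)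
      = Real.sqrt ((2 * Real.pi) ^ d) * Real.exp (-(1 / 2) * (t ⬝ᵥ t)) := by
  have hb : ∀ _i : Fin d, 0 < ((1/2 : ℂ)).re := fun _ => by norm_num
  have key := GaussianFourier.integral_cexp_neg_sum_mul_add (b := fun _ => (1/2 : ℂ)) hb
      (fun i => (t i : ℂ) * Complex.I)
  have hint := GaussianFourier.integrable_cexp_neg_sum_mul_add (b := fun _ => (1/2 : ℂ)) hb
      (fun i => (t i : ℂ) * Complex.I)
  have harg : ∀ v : Fin d → ℝ,
      (-∑ i, (1/2 : ℂ) * (v i : ℂ) ^ 2 + ∑ i, ((t i : ℂ) * Complex.I) * (v i : ℂ))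
        = ((-(1/2) * (v ⬝ᵥ v) : ℝ) : ℂ) + ((v ⬝ᵥ t : ℝ) : ℂ) * Complex.I := by
    intro v
    have e1 : -∑ i, (1/2 : ℂ) * (v i : ℂ) ^ 2 = ∑ i, (-(1/2) * ((v i : ℂ) * (v i : ℂ))) := by
      rw [← Finset.sum_neg_distrib]
      exact Finset.sum_congr rfl (fun i _ => by ring)
    have e2 : ∑ i, ((t i : ℂ) * Complex.I) * (v i : ℂ)
        = (∑ i, (v i : ℂ) * (t i : ℂ)) * Complex.I := by
      rw [Finset.sum_mul]
      exact Finset.sum_congr rfl (fun i _ => by ring)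
    rw [e1, e2]
    simp only [dotProduct]
    push_cast
    rw [Finset.mul_sum]
  have hre : ∀ v : Fin d → ℝ,
      Real.exp (-(1 / 2) * (v ⬝ᵥ v)) * Real.cos (v ⬝ᵥ t)
        = (Complex.exp (-∑ i, (1/2 : ℂ) * (v i : ℂ) ^ 2 + ∑ i, ((t i : ℂ) * Complex.I) * (v i : ℂ))).re := by
    intro v
    rw [harg v, Complex.exp_re]
    simp
  calc ∫ v : Fin d → ℝ, Real.exp (-(1 / 2) * (v ⬝ᵥ v)) * Real.cos (v ⬝ᵥ t)
      = ∫ v : Fin d → ℝ, (Complex.exp (-∑ i, (1/2 : ℂ) * (v i : ℂ) ^ 2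
          + ∑ i, ((t i : ℂ) * Complex.I) * (v i : ℂ))).re := by
        congr 1; ext v; exact hre v
    _ = (∫ v : Fin d → ℝ, Complex.exp (-∑ i, (1/2 : ℂ) * (v i : ℂ) ^ 2
          + ∑ i, ((t i : ℂ) * Complex.I) * (v i : ℂ))).re := by
        exact_mod_cast integral_re hint
    _ = ((∏ _i : Fin d, ((Real.pi : ℂ) / (1/2)) ^ (1/2 : ℂ)
          * Complex.exp (((t _i : ℂ) * Complex.I) ^ 2 / (4 * (1/2)))) : ℂ).re := by rw [key]
    _ = Real.sqrt ((2 * Real.pi) ^ d) * Real.exp (-(1 / 2) * (t ⬝ᵥ t)) := by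
        have h1 : ∀ i : Fin d, ((Real.pi : ℂ) / (1/2)) ^ (1/2 : ℂ)
            * Complex.exp (((t i : ℂ) * Complex.I) ^ 2 / (4 * (1/2)))
            = ((Real.sqrt (2 * Real.pi) * Real.exp (-(1/2) * (t i)^2) : ℝ) : ℂ) := by
          intro i
          have h2 : ((Real.pi : ℂ) / (1/2)) = ((2 * Real.pi : ℝ) : ℂ) := by push_cast; ring
          have h3 : ((2 * Real.pi : ℝ) : ℂ) ^ (1/2 : ℂ) = ((Real.sqrt (2 * Real.pi) : ℝ) : ℂ) := by
            rw [show (1/2 : ℂ) = ((1/2 : ℝ) : ℂ) by norm_num,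
              ← Complex.ofReal_cpow (by positivity) (1/2 : ℝ), ← Real.sqrt_eq_rpow]
          have h4 : ((t i : ℂ) * Complex.I) ^ 2 / (4 * (1/2)) = ((-(1/2) * (t i)^2 : ℝ) : ℂ) := by
            push_cast
            rw [mul_pow, Complex.I_sq]
            ring
          rw [h2, h3, h4, ← Complex.ofReal_exp, ← Complex.ofReal_mul]
        rw [Finset.prod_congr rfl (fun i _ => h1 i)]
        rw [← Complex.ofReal_prod, Complex.ofReal_re]
        rw [Finset.prod_mul_distrib, Finset.prod_const, ← Real.exp_sum]
        rw [← sqrt_pow' _ (by positivity)]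
        congr 2
        · simp [Finset.card_univ]
        · simp only [dotProduct]
          rw [Finset.mul_sum]
          exact Finset.sum_congr rfl (fun i _ => by ring)



section MatrixFacts
variable {d : ℕ} {S : Matrix (Fin d) (Fin d) ℝ} (hSpd : S.PosDef)
open scoped MatrixOrder

noncomputable def Pm (_hSpd : S.PosDef) : Matrix (Fin d) (Fin d) ℝ := CFC.sqrt S⁻¹

lemma Pm_mul_Pm : Pm hSpd * Pm hSpd = S⁻¹ := CFC.sqrt_mul_sqrt_self _ hSpd.inv.posSemidef.nonneg

lemma Pm_symm : (Pm hSpd)ᵀ = Pm hSpd := by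
  have h := (CFC.sqrt_nonneg (S⁻¹)).posSemidef.isHermitian
  simpa [Matrix.IsHermitian, Matrix.conjTranspose_eq_transpose_of_trivial, Pm] using h

lemma Pm_det_sq : (Pm hSpd).det * (Pm hSpd).det = (S.det)⁻¹ := by
  have := congrArg Matrix.det (Pm_mul_Pm hSpd)
  rwa [Matrix.det_mul, Matrix.det_nonsing_inv, Ring.inverse_eq_inv'] at this

lemma Pm_det_nonneg : 0 ≤ (Pm hSpd).det := by
  have hsd := (CFC.sqrt_nonneg (S⁻¹)).posSemidef
  unfold Pm
  rw [hsd.isHermitian.det_eq_prod_eigenvalues]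
  exact Finset.prod_nonneg fun i _ => hsd.eigenvalues_nonneg i

lemma Pm_det : (Pm hSpd).det = (Real.sqrt S.det)⁻¹ := by
  have h2 := Pm_det_sq hSpd
  have h3 : (Pm hSpd).det = Real.sqrt (S.det)⁻¹ := by
    rw [← h2]
    exact (Real.sqrt_mul_self (Pm_det_nonneg hSpd)).symm
  rw [h3, Real.sqrt_inv]

lemma Pm_det_ne : (Pm hSpd).det ≠ 0 := by
  rw [Pm_det hSpd]
  have := hSpd.det_pos
  positivity

lemma Pm_S_Pm : Pm hSpd * S * Pm hSpd = 1 := by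
  have hS1 : S * S⁻¹ = 1 := Matrix.mul_nonsing_inv S hSpd.det_pos.ne'.isUnit
  have h1 : (S * Pm hSpd) * Pm hSpd = 1 := by
    rw [Matrix.mul_assoc, Pm_mul_Pm, hS1]
  have h2 : Pm hSpd * (S * Pm hSpd) = 1 := mul_eq_one_comm.mp h1
  rw [← Matrix.mul_assoc] at h2
  exact h2

lemma Pm_dot (u z : Fin d → ℝ) : ((Pm hSpd).mulVec u) ⬝ᵥ z = u ⬝ᵥ (Pm hSpd).mulVec z := by
  rw [Matrix.dotProduct_mulVec]
  nth_rewrite 2 [← Pm_symm hSpd]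
  rw [Matrix.vecMul_transpose]

lemma Pm_quad (u : Fin d → ℝ) :
    ((Pm hSpd).mulVec u) ⬝ᵥ S.mulVec ((Pm hSpd).mulVec u) = u ⬝ᵥ u := by
  rw [Pm_dot hSpd, Matrix.mulVec_mulVec, Matrix.mulVec_mulVec]
  rw [Pm_S_Pm hSpd, Matrix.one_mulVec]

lemma Pm_quad' (t : Fin d → ℝ) :
    ((Pm hSpd).mulVec t) ⬝ᵥ ((Pm hSpd).mulVec t) = t ⬝ᵥ (S⁻¹).mulVec t := by
  rw [Pm_dot hSpd, Matrix.mulVec_mulVec, Pm_mul_Pm hSpd]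

end MatrixFacts

lemma integral_comp_mulVec {d : ℕ} (M : Matrix (Fin d) (Fin d) ℝ) (hM : M.det ≠ 0)
    (g : (Fin d → ℝ) → ℝ) (hg : AEStronglyMeasurable g volume) :
    ∫ u, g (M.mulVec u) = |M.det|⁻¹ * ∫ w, g w := by
  have hmap := Real.map_matrix_volume_pi_eq_smul_volume_pi hM
  have hgm : AEStronglyMeasurable g (Measure.map (⇑(Matrix.toLin' M)) volume) := by
    rw [hmap]
    exact hg.smul_measure _
  have h1 : ∫ u, g (M.mulVec u) = ∫ w, g w ∂(Measure.map (⇑(Matrix.toLin' M)) volume) := by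
    rw [MeasureTheory.integral_map (by fun_prop) hgm]
    simp_rw [Matrix.toLin'_apply]
  rw [h1, hmap, MeasureTheory.integral_smul_measure]
  simp [ENNReal.toReal_ofReal (abs_nonneg _), abs_inv]

lemma integrable_comp_mulVec {d : ℕ} (M : Matrix (Fin d) (Fin d) ℝ) (hM : M.det ≠ 0)
    (g : (Fin d → ℝ) → ℝ) (hg : AEStronglyMeasurable g volume) :
    Integrable g volume ↔ Integrable (fun u => g (M.mulVec u)) volume := by
  have hmap := Real.map_matrix_volume_pi_eq_smul_volume_pi hM
  have hgm : AEStronglyMeasurable g (Measure.map (⇑(Matrix.toLin' M)) volume) := by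
    rw [hmap]; exact hg.smul_measure _
  have h1 := MeasureTheory.integrable_map_measure (f := ⇑(Matrix.toLin' M)) (g := g) hgm
    (by fun_prop)
  rw [hmap, MeasureTheory.integrable_smul_measure (by simp [hM]) (by simp)] at h1
  have h2 : (g ∘ ⇑(Matrix.toLin' M)) = fun u => g (M.mulVec u) := by
    funext u; simp [Function.comp, Matrix.toLin'_apply]
  rw [h1, h2]

section Main
variable {d : ℕ} {S : Matrix (Fin d) (Fin d) ℝ} (hSpd : S.PosDef)

lemma cont_quad : Continuous fun w : Fin d → ℝ => w ⬝ᵥ S.mulVec w := by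
  unfold dotProduct Matrix.mulVec dotProduct
  fun_prop

lemma cont_dot (t : Fin d → ℝ) : Continuous fun w : Fin d → ℝ => w ⬝ᵥ t := by
  unfold dotProduct
  fun_prop

lemma cont_density :
    Continuous fun w : Fin d → ℝ =>
      Real.sqrt S.det / Real.sqrt ((2 * Real.pi) ^ d) *
        Real.exp (-(1 / 2) * (w ⬝ᵥ S.mulVec w)) := by
  have := @cont_quad d S
  fun_prop

lemma density_nonneg (w : Fin d → ℝ) :
    0 ≤ Real.sqrt S.det / Real.sqrt ((2 * Real.pi) ^ d) *
        Real.exp (-(1 / 2) * (w ⬝ᵥ S.mulVec w)) := by positivity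

include hSpd in
lemma integral_gaussianOfPrecision (g : (Fin d → ℝ) → ℝ) (hg : Continuous g) :
    ∫ w, g w ∂(gaussianOfPrecision S)
      = (Real.sqrt S.det)⁻¹ *
        ∫ u, (Real.sqrt S.det / Real.sqrt ((2 * Real.pi) ^ d)) *
          Real.exp (-(1 / 2) * (u ⬝ᵥ u)) * g ((Pm hSpd).mulVec u) := by
  set c := Real.sqrt S.det / Real.sqrt ((2 * Real.pi) ^ d) with hc
  set ρ := fun w : Fin d → ℝ => c * Real.exp (-(1 / 2) * (w ⬝ᵥ S.mulVec w)) with hρ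
  have hρc : Continuous ρ := cont_density
  have h1 : ∫ w, g w ∂(gaussianOfPrecision S) = ∫ w, ρ w * g w := by
    unfold gaussianOfPrecision
    rw [show (fun w : Fin d → ℝ => ENNReal.ofReal (c * Real.exp (-(1 / 2) * (w ⬝ᵥ S.mulVec w))))
        = fun w => (((ρ w).toNNReal : ℝ≥0) : ℝ≥0∞) from rfl]
    rw [integral_withDensity_eq_integral_smul (by fun_prop) g]
    congr 1
    funext w
    rw [NNReal.smul_def, Real.coe_toNNReal _ (by simpa [hρ] using density_nonneg (S := S) w), smul_eq_mul]
  have h2 : ∫ w, ρ w * g w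
      = |(Pm hSpd).det| * ∫ u, ρ ((Pm hSpd).mulVec u) * g ((Pm hSpd).mulVec u) := by
    have := integral_comp_mulVec (Pm hSpd) (Pm_det_ne hSpd) (fun w => ρ w * g w)
      (by exact (hρc.mul hg).aestronglyMeasurable)
    rw [this]
    rw [_root_.abs_of_nonneg (Pm_det_nonneg hSpd), ← mul_assoc,
      mul_inv_cancel₀ (Pm_det_ne hSpd), one_mul]
  rw [h1, h2, _root_.abs_of_nonneg (Pm_det_nonneg hSpd), Pm_det hSpd]
  congr 1
  congr 1
  funext u
  rw [hρ]
  simp only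
  rw [Pm_quad hSpd]

include hSpd in
lemma gaussian_cos (t : Fin d → ℝ) :
    ∫ w, Real.cos (w ⬝ᵥ t) ∂(gaussianOfPrecision S)
      = Real.exp (-(1 / 2) * (t ⬝ᵥ (S⁻¹).mulVec t)) := by
  rw [integral_gaussianOfPrecision hSpd _ (by have := @cont_dot d t; fun_prop)]
  have h1 : ∀ u : Fin d → ℝ, ((Pm hSpd).mulVec u) ⬝ᵥ t = u ⬝ᵥ ((Pm hSpd).mulVec t) :=
    fun u => Pm_dot hSpd u t
  simp_rw [h1, mul_assoc, MeasureTheory.integral_const_mul, gauss_cos_integral d ((Pm hSpd).mulVec t),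
    Pm_quad' hSpd t]
  have hπ : (0:ℝ) < Real.sqrt ((2 * Real.pi) ^ d) := by positivity
  have hdS : (0:ℝ) < Real.sqrt S.det := Real.sqrt_pos.mpr hSpd.det_pos
  field_simp



lemma uniformPhase_prob : IsProbabilityMeasure uniformPhase := by
  constructor
  unfold uniformPhase
  rw [Measure.smul_apply, Measure.restrict_apply_univ, Real.volume_Icc]
  simp only [smul_eq_mul, sub_zero]
  rw [ENNReal.inv_mul_cancel (by positivity) (by simp [ENNReal.mul_eq_top])]

lemma phase_integral (a c : ℝ) :
    ∫ b, 2 * Real.sin (a + b) * Real.sin (c + b) ∂uniformPhase = Real.cos (a - c) := by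
  have hid : ∀ b : ℝ, 2 * Real.sin (a + b) * Real.sin (c + b)
      = Real.cos (a - c) - Real.cos (a + c + 2 * b) := by
    intro b
    have h := Real.cos_sub_cos (a - c) (a + c + 2 * b)
    have e1 : (a - c + (a + c + 2 * b)) / 2 = a + b := by ring
    have e2 : (a - c - (a + c + 2 * b)) / 2 = -(c + b) := by ring
    rw [e1, e2, Real.sin_neg] at h
    linear_combination -h
  simp_rw [hid]
  unfold uniformPhase
  rw [MeasureTheory.integral_smul_measure]
  have hIcc : ∫ b in Set.Icc 0 (2 * Real.pi), (Real.cos (a - c) - Real.cos (a + c + 2 * b))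
      = 2 * Real.pi * Real.cos (a - c) := by
    rw [MeasureTheory.integral_Icc_eq_integral_Ioc,
      ← intervalIntegral.integral_of_le (by positivity : (0:ℝ) ≤ 2 * Real.pi)]
    have hi1 : IntervalIntegrable (fun _ : ℝ => Real.cos (a - c)) volume 0 (2 * Real.pi) :=
      intervalIntegrable_const
    have hi2 : IntervalIntegrable (fun b : ℝ => Real.cos (a + c + 2 * b)) volume 0 (2 * Real.pi) :=
      (Real.continuous_cos.comp (by fun_prop)).intervalIntegrable _ _
    rw [intervalIntegral.integral_sub hi1 hi2, intervalIntegral.integral_const]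
    have h2 : ∫ b in (0:ℝ)..(2 * Real.pi), Real.cos (a + c + 2 * b) = 0 := by
      have := intervalIntegral.integral_comp_mul_add (a := 0) (b := 2 * Real.pi)
        Real.cos (two_ne_zero) (a + c)
      simp_rw [show ∀ b : ℝ, a + c + 2 * b = 2 * b + (a + c) from fun b => by ring]
      rw [this, integral_cos]
      have : 2 * (2 * Real.pi) + (a + c) = (a + c + 2 * Real.pi) + 2 * Real.pi := by ring
      rw [this, Real.sin_add_two_pi, Real.sin_add_two_pi]
      simp [add_comm]
    rw [h2, sub_zero, smul_eq_mul, sub_zero]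
  rw [hIcc]
  rw [ENNReal.toReal_inv, ENNReal.toReal_ofReal (by positivity)]
  rw [smul_eq_mul, ← mul_assoc, inv_mul_cancel₀ (by positivity), one_mul]

include hSpd in
lemma integrable_density :
    Integrable (fun w : Fin d → ℝ =>
      Real.sqrt S.det / Real.sqrt ((2 * Real.pi) ^ d) *
        Real.exp (-(1 / 2) * (w ⬝ᵥ S.mulVec w))) volume := by
  rw [integrable_comp_mulVec (Pm hSpd) (Pm_det_ne hSpd) _
    (cont_density).aestronglyMeasurable]
  simp_rw [Pm_quad hSpd]
  apply Integrable.const_mul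
  have : (fun u : Fin d → ℝ => Real.exp (-(1 / 2) * (u ⬝ᵥ u)))
      = fun u : Fin d → ℝ => ∏ i, Real.exp (-(1/2) * (u i) ^ 2) := by
    funext u
    rw [← Real.exp_sum]
    congr 1
    simp only [dotProduct]
    rw [Finset.mul_sum]
    exact Finset.sum_congr rfl fun i _ => by ring
  rw [this]
  exact Integrable.fintype_prod
    (f := fun (_ : Fin d) (v : ℝ) => Real.exp (-(1/2) * v ^ 2)) fun i => by
    simpa using integrable_exp_neg_mul_sq (by norm_num : (0:ℝ) < 1/2)

include hSpd in
lemma gaussian_finite : IsFiniteMeasure (gaussianOfPrecision S) := by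
  unfold gaussianOfPrecision
  apply isFiniteMeasure_withDensity
  rw [← MeasureTheory.ofReal_integral_eq_lintegral_ofReal (integrable_density hSpd)
    (Filter.Eventually.of_forall density_nonneg)]
  simp

end Main

/-- Random Fourier features give the RBF kernel: for
`w ~ N(0, S⁻¹)` and `b` uniform on `[0, 2π]`, independent,
`E[2 sin(⟨w,x⟩+b) sin(⟨w,y⟩+b)] = exp(−½ ⟨x−y, S⁻¹(x−y)⟩)`. -/
theorem expectation_randomFourier_eq_rbf
    (d : ℕ) (hd : 1 ≤ d) (S : Matrix (Fin d) (Fin d) ℝ)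
    (hSsym : S.IsSymm) (hSpd : S.PosDef) (x y : Fin d → ℝ) :
    ∫ p : (Fin d → ℝ) × ℝ,
        2 * Real.sin (p.1 ⬝ᵥ x + p.2) * Real.sin (p.1 ⬝ᵥ y + p.2)
        ∂((gaussianOfPrecision S).prod uniformPhase)
      = Real.exp (-(1 / 2) * ((x - y) ⬝ᵥ S⁻¹.mulVec (x - y))) := by
  haveI : IsProbabilityMeasure uniformPhase := uniformPhase_prob
  haveI : IsFiniteMeasure (gaussianOfPrecision S) := gaussian_finite hSpd
  have hfc : Continuous fun p : (Fin d → ℝ) × ℝ =>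
      2 * Real.sin (p.1 ⬝ᵥ x + p.2) * Real.sin (p.1 ⬝ᵥ y + p.2) := by
    have h1 := cont_dot x
    have h2 := cont_dot y
    fun_prop
  have hint : Integrable
      (fun p : (Fin d → ℝ) × ℝ => 2 * Real.sin (p.1 ⬝ᵥ x + p.2) * Real.sin (p.1 ⬝ᵥ y + p.2))
      ((gaussianOfPrecision S).prod uniformPhase) := by
    constructor
    · exact hfc.aestronglyMeasurable
    · apply MeasureTheory.HasFiniteIntegral.of_bounded (C := 2)
      filter_upwards with p
      have b1 : |Real.sin (p.1 ⬝ᵥ x + p.2)| ≤ 1 :=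
        abs_le.mpr ⟨Real.neg_one_le_sin _, Real.sin_le_one _⟩
      have b2 : |Real.sin (p.1 ⬝ᵥ y + p.2)| ≤ 1 :=
        abs_le.mpr ⟨Real.neg_one_le_sin _, Real.sin_le_one _⟩
      rw [Real.norm_eq_abs, abs_mul, abs_mul, show |(2:ℝ)| = 2 from abs_of_nonneg (by norm_num)]
      nlinarith [abs_nonneg (Real.sin (p.1 ⬝ᵥ x + p.2)), abs_nonneg (Real.sin (p.1 ⬝ᵥ y + p.2))]
  rw [MeasureTheory.integral_prod _ hint]
  have hin : ∀ w : Fin d → ℝ,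
      ∫ b, 2 * Real.sin (w ⬝ᵥ x + b) * Real.sin (w ⬝ᵥ y + b) ∂uniformPhase
        = Real.cos (w ⬝ᵥ (x - y)) := by
    intro w
    rw [phase_integral (w ⬝ᵥ x) (w ⬝ᵥ y), dotProduct_sub]
  simp_rw [hin]
  exact gaussian_cos hSpd (x - y)
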